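/- Let n ≥ 2, let p_1, ..., p_n be distinct positive real numbers, and let r be a real number with 1 < r < 3. Then the inertia of the Kwong matrix K_r(p_1,...,p_n) equals (1, 0, n−1). -/

import Mathlib

/-!
On the hyperplane `∑ xᵢ = 0` the Kwong form of exponent `r` is minus one of exponent `r - 2`:
`(pᵢ^r + pⱼ^r)/(pᵢ + pⱼ) = pᵢ^(r-1) + pⱼ^(r-1) - pᵢ pⱼ (pᵢ^(r-2) + pⱼ^(r-2))/(pᵢ + pⱼ)`, and the
rank-two part vanishes there, so `xᵀ K_r x = -yᵀ K_{r-2} y` with `yᵢ = pᵢ xᵢ`. For `|s| < 1` the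
matrix `K_s` is positive definite: `K_0` is twice the Cauchy matrix
`1/(pᵢ + pⱼ) = ∫₀^∞ e^(-(pᵢ+pⱼ)t) dt`, `K_{-s}` is congruent to `K_s` through `diag(pᵢ^(-s))`,
and for `0 < s < 1` the representation `x^s = c ∫₀^∞ t^(s-1) x/(t+x) dt` exhibits `K_s` as an
integral of positive definite matrices. So `K_r` is negative definite on a hyperplane and has at
most one nonnegative eigenvalue, while its trace `∑ pᵢ^(r-1)` is positive.
-/

open Matrix

/-- The Kwong matrix: (i,j) entry is `(p i ^ r + p j ^ r) / (p i + p j)`. -/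
noncomputable def kwong {n : ℕ} (p : Fin n → ℝ) (r : ℝ) : Matrix (Fin n) (Fin n) ℝ :=
  Matrix.of fun i j => (p i ^ r + p j ^ r) / (p i + p j)

lemma kwong_isHermitian {n : ℕ} (p : Fin n → ℝ) (r : ℝ) : (kwong p r).IsHermitian := by
  ext i j
  simp only [kwong, Matrix.conjTranspose_apply, Matrix.of_apply, star_trivial]
  rw [add_comm (p j ^ r), add_comm (p j)]

/-- The inertia of a real symmetric matrix: the numbers of positive, zero and
negative eigenvalues, counted with multiplicity. -/
noncomputable def inertia {n : ℕ} (A : Matrix (Fin n) (Fin n) ℝ) (hA : A.IsHermitian) :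
    ℕ × ℕ × ℕ :=
  ({i | 0 < hA.eigenvalues i}.ncard, {i | hA.eigenvalues i = 0}.ncard,
    {i | hA.eigenvalues i < 0}.ncard)

open MeasureTheory Set Real

variable {ι : Type*} [Fintype ι]

section Integrals

variable {α : Type*} [MeasurableSpace α] {μ : Measure α}

theorem setIntegral_pos_of_forall_pos {f : α → ℝ} {s : Set α} (hs : MeasurableSet s)
    (hμs : 0 < μ s) (hf : IntegrableOn f s μ) (hpos : ∀ x ∈ s, 0 < f x) :
    0 < ∫ x in s, f x ∂μ := by
  rw [setIntegral_pos_iff_support_of_nonneg_ae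
    ((ae_restrict_iff' hs).mpr (ae_of_all μ fun x hx => (hpos x hx).le)) hf]
  exact hμs.trans_le (measure_mono fun x hx => ⟨(hpos x hx).ne', hx⟩)

theorem setIntegral_pos_of_continuousOn [TopologicalSpace α] [OpensMeasurableSpace α]
    [μ.IsOpenPosMeasure] {f : α → ℝ} {s : Set α} (hs : IsOpen s) (hf : IntegrableOn f s μ)
    (hfc : ContinuousOn f s) (hnonneg : ∀ x ∈ s, 0 ≤ f x) {x₀ : α} (hx₀ : x₀ ∈ s)
    (hfx₀ : f x₀ ≠ 0) : 0 < ∫ x in s, f x ∂μ := by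
  rw [setIntegral_pos_iff_support_of_nonneg_ae
    ((ae_restrict_iff' hs.measurableSet).mpr (ae_of_all μ hnonneg)) hf]
  exact (IsOpen.measure_pos μ (hfc.isOpen_inter_preimage hs isOpen_compl_singleton)
    ⟨x₀, hx₀, hfx₀⟩).trans_le (measure_mono fun x hx => ⟨hx.2, hx.1⟩)

theorem integrable_dotProduct_mulVec {F : α → Matrix ι ι ℝ}
    (hF : ∀ i j, Integrable (fun t => F t i j) μ) (x y : ι → ℝ) :
    Integrable (fun t => x ⬝ᵥ (F t *ᵥ y)) μ := by
  simp_rw [dot_mulVec_eq_sum_sum]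
  exact integrable_finsetSum _ fun j _ => integrable_finsetSum _ fun i _ =>
    ((hF i j).const_mul _).mul_const _

theorem dotProduct_mulVec_of_integral {F : α → Matrix ι ι ℝ}
    (hF : ∀ i j, Integrable (fun t => F t i j) μ) (x y : ι → ℝ) :
    x ⬝ᵥ (Matrix.of (fun i j => ∫ t, F t i j ∂μ) *ᵥ y) = ∫ t, x ⬝ᵥ (F t *ᵥ y) ∂μ := by
  simp_rw [dot_mulVec_eq_sum_sum]
  rw [integral_finsetSum _ fun j _ => integrable_finsetSum _ fun i _ =>
    ((hF i j).const_mul _).mul_const _]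
  refine Finset.sum_congr rfl fun j _ => ?_
  rw [integral_finsetSum _ fun i _ => ((hF i j).const_mul _).mul_const _]
  refine Finset.sum_congr rfl fun i _ => ?_
  rw [integral_mul_const, integral_const_mul, of_apply]

end Integrals

theorem eq_zero_of_forall_sum_mul_exp_eq_zero {p : ι → ℝ} (hp : Function.Injective p)
    {x : ι → ℝ} (h : ∀ t > 0, ∑ i, x i * exp (p i * t) = 0) : x = 0 := by
  let χ : ι → Multiplicative ℕ →* ℝ := fun i => powersHom ℝ (exp (p i))
  have hχ : Function.Injective χ := fun i j hij => hp <| by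
    simpa [χ] using congr($hij (Multiplicative.ofAdd 1))
  -- Dedekind's independence of characters, tested on `k ↦ ∑ i, x i * exp (p i * (k + 1))`
  have hindep := (linearIndependent_monoidHom (Multiplicative ℕ) ℝ).comp χ hχ
  ext i
  have := Fintype.linearIndependent_iff.mp hindep (fun i => x i * exp (p i)) (funext fun k => by
    simpa [χ, ← exp_nat_mul, ← exp_add, mul_assoc, mul_add, add_comm, mul_comm] using
      h (Multiplicative.toAdd k + 1) (by positivity)) i
  simpa [exp_ne_zero] using this

theorem inv_add_eq_integral_exp {a b : ℝ} (ha : 0 < a) (hb : 0 < b) :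
    (a + b)⁻¹ = ∫ t in Ioi 0, exp (-(a * t)) * exp (-(b * t)) := by
  simp_rw [← exp_add, ← neg_add, ← add_mul, ← neg_mul]
  rw [integral_exp_mul_Ioi (by linarith), mul_zero, exp_zero, neg_div, div_neg, neg_neg, one_div]

theorem posDef_cauchy {p : ι → ℝ} (hp : ∀ i, 0 < p i) (hinj : Function.Injective p) :
    (Matrix.of fun i j => (p i + p j)⁻¹).PosDef := by
  set e : ℝ → ι → ℝ := fun t i => exp (-(p i * t))
  have hF : ∀ i j, IntegrableOn (fun t => vecMulVec (e t) (e t) i j) (Ioi 0) := fun i j => by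
    refine (integrableOn_exp_mul_Ioi (a := -(p i + p j)) (by linarith [hp i, hp j]) 0).congr_fun
      (fun t _ => ?_) measurableSet_Ioi
    simp only [e, vecMulVec_apply, ← exp_add]
    ring_nf
  have hC : (Matrix.of fun i j => (p i + p j)⁻¹)
      = Matrix.of fun i j => ∫ t in Ioi 0, vecMulVec (e t) (e t) i j := by
    ext i j
    simp [e, vecMulVec, inv_add_eq_integral_exp (hp i) (hp j)]
  refine .of_dotProduct_mulVec_pos (by ext i j; simp [add_comm]) fun x hx => ?_
  have hform : ∀ t, x ⬝ᵥ (vecMulVec (e t) (e t) *ᵥ x) = (e t ⬝ᵥ x) ^ 2 := fun t => by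
    rw [vecMulVec_mulVec, dotProduct_comm]
    simp [sq]
  obtain ⟨t₀, ht₀, hne⟩ : ∃ t > 0, e t ⬝ᵥ x ≠ 0 := by
    by_contra! h
    refine hx (eq_zero_of_forall_sum_mul_exp_eq_zero (p := fun i => -p i)
      (neg_injective.comp hinj) fun t ht => ?_)
    simpa [dotProduct, e, mul_comm] using h t ht
  rw [star_trivial, hC, dotProduct_mulVec_of_integral hF]
  simp_rw [hform]
  refine setIntegral_pos_of_continuousOn isOpen_Ioi ?_ ?_ (fun t _ => sq_nonneg _) ht₀
    (pow_ne_zero 2 hne)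
  · have := integrable_dotProduct_mulVec hF x x
    simp_rw [hform] at this
    exact this
  · exact Continuous.continuousOn (by fun_prop)

namespace Matrix.IsHermitian

variable [DecidableEq ι] {A : Matrix ι ι ℝ}

theorem exists_eigenvalues_pos (hA : A.IsHermitian) (htr : 0 < A.trace) :
    ∃ i, 0 < hA.eigenvalues i := by
  by_contra! h
  rw [hA.trace_eq_sum_eigenvalues] at htr
  exact htr.not_ge (Finset.sum_nonpos fun i _ => h i)

theorem dotProduct_eigenvectorBasis (hA : A.IsHermitian) (i j : ι) :
    ⇑(hA.eigenvectorBasis i) ⬝ᵥ ⇑(hA.eigenvectorBasis j) = if i = j then 1 else 0 := by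
  rw [← orthonormal_iff_ite.mp hA.eigenvectorBasis.orthonormal i j]
  simp [PiLp.inner_apply, dotProduct, mul_comm]

/-- The plane spanned by two eigenvectors with nonnegative eigenvalues would meet the
hyperplane `u ⬝ᵥ x = 0`. -/
theorem subsingleton_setOf_eigenvalues_nonneg (hA : A.IsHermitian) {u : ι → ℝ}
    (hneg : ∀ x, x ≠ 0 → u ⬝ᵥ x = 0 → x ⬝ᵥ (A *ᵥ x) < 0) :
    {i | 0 ≤ hA.eigenvalues i}.Subsingleton := by
  intro j hj k hk
  by_contra hjk
  set b : ι → ι → ℝ := fun i => ⇑(hA.eigenvectorBasis i)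
  obtain ⟨α, β, hαβ, hu⟩ : ∃ α β : ℝ, ¬(α = 0 ∧ β = 0) ∧
      α * (u ⬝ᵥ b j) + β * (u ⬝ᵥ b k) = 0 := by
    by_cases h : u ⬝ᵥ b j = 0
    · exact ⟨1, 0, by simp, by simp [h]⟩
    · exact ⟨u ⬝ᵥ b k, -(u ⬝ᵥ b j), fun h' => h (neg_eq_zero.mp h'.2), by ring⟩
  set x := α • b j + β • b k
  have hjx : b j ⬝ᵥ x = α := by
    simp [x, b, dotProduct_add, dotProduct_eigenvectorBasis, hjk]
  have hkx : b k ⬝ᵥ x = β := by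
    simp [x, b, dotProduct_add, dotProduct_eigenvectorBasis, Ne.symm hjk]
  have hx : x ≠ 0 := fun h => hαβ ⟨by simp [← hjx, h], by simp [← hkx, h]⟩
  have hux : u ⬝ᵥ x = 0 := by simpa [x, dotProduct_add] using hu
  have hAx : x ⬝ᵥ (A *ᵥ x) = hA.eigenvalues j * α ^ 2 + hA.eigenvalues k * β ^ 2 := by
    simp only [x, mulVec_add, mulVec_smul, b, hA.mulVec_eigenvectorBasis, dotProduct_add,
      dotProduct_smul, smul_eq_mul]
    rw [dotProduct_comm, hjx, dotProduct_comm, hkx]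
    ring
  have : 0 ≤ x ⬝ᵥ (A *ᵥ x) := by
    rw [hAx]
    exact add_nonneg (mul_nonneg hj (sq_nonneg _)) (mul_nonneg hk (sq_nonneg _))
  exact (hneg x hx hux).not_ge this

end Matrix.IsHermitian

theorem inertia_eq_of_trace_pos_of_neg_on_hyperplane {n : ℕ} {A : Matrix (Fin n) (Fin n) ℝ}
    (hA : A.IsHermitian) (htr : 0 < A.trace) {u : Fin n → ℝ}
    (hneg : ∀ x, x ≠ 0 → u ⬝ᵥ x = 0 → x ⬝ᵥ (A *ᵥ x) < 0) :
    inertia A hA = (1, 0, n - 1) := by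
  obtain ⟨i₀, hi₀⟩ := hA.exists_eigenvalues_pos htr
  have hnonneg : ∀ i, 0 ≤ hA.eigenvalues i ↔ i = i₀ := fun i =>
    ⟨fun hi => hA.subsingleton_setOf_eigenvalues_nonneg hneg hi hi₀.le, fun h => h ▸ hi₀.le⟩
  have hpos : {i | 0 < hA.eigenvalues i} = {i₀} := by
    ext i
    exact ⟨fun hi => (hnonneg i).mp hi.le, fun h => h ▸ hi₀⟩
  have hzero : {i | hA.eigenvalues i = 0} = ∅ :=
    Set.eq_empty_of_forall_notMem fun i (hi : hA.eigenvalues i = 0) =>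
      ((hnonneg i).mp hi.ge ▸ hi₀).ne' hi
  have hnegative : {i | hA.eigenvalues i < 0} = {i₀}ᶜ := by
    ext i
    simp [← hnonneg i]
  simp only [inertia, hpos, hzero, hnegative, Set.ncard_singleton, Set.ncard_empty]
  rw [Set.ncard_compl, Set.ncard_singleton, Nat.card_eq_fintype_card, Fintype.card_fin]

section Diagonal

variable [DecidableEq ι]

theorem Matrix.diagonal_mulVec_injective {K : Type*} [Field K] {d : ι → K}
    (hd : ∀ i, d i ≠ 0) :
    Function.Injective (diagonal d).mulVec :=
  mulVec_injective_iff_isUnit.mpr (isUnit_diagonal.mpr (Pi.isUnit_iff.mpr fun i => (hd i).isUnit))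

theorem Matrix.PosDef.diagonal_mul_mul_diagonal {A : Matrix ι ι ℝ} (hA : A.PosDef) {d : ι → ℝ}
    (hd : ∀ i, d i ≠ 0) : (diagonal d * A * diagonal d).PosDef := by
  simpa using hA.conjTranspose_mul_mul_same (diagonal_mulVec_injective hd)

theorem posDef_rpowIntegrand₀₁_kwong {p : ι → ℝ} (hp : ∀ i, 0 < p i)
    (hinj : Function.Injective p) {s t : ℝ} (hs : s ∈ Ioo 0 1) (ht : 0 < t) :
    (Matrix.of fun i j =>
      (rpowIntegrand₀₁ s t (p i) + rpowIntegrand₀₁ s t (p j)) / (p i + p j)).PosDef := by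
  set a : ι → ℝ := fun i => (t + p i)⁻¹
  set b : ι → ℝ := fun i => p i / (t + p i)
  have hM : (Matrix.of fun i j =>
      (rpowIntegrand₀₁ s t (p i) + rpowIntegrand₀₁ s t (p j)) / (p i + p j))
      = t ^ (s - 1) • (t • vecMulVec a a
        + (2 : ℝ) • (diagonal b * Matrix.of (fun i j => (p i + p j)⁻¹) * diagonal b)) := by
    ext i j
    have := hp i
    have := hp j
    simp [rpowIntegrand₀₁_eq_pow_div hs ht.le (hp i).le,
      rpowIntegrand₀₁_eq_pow_div hs ht.le (hp j).le, a, b, vecMulVec, diagonal_mul, mul_diagonal]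
    field_simp
    ring
  rw [hM]
  refine .smul (.posSemidef_add ?_ ?_) (by positivity)
  · simpa using (posSemidef_vecMulVec_self_star a).smul ht.le
  · exact ((posDef_cauchy hp hinj).diagonal_mul_mul_diagonal fun i =>
      div_ne_zero (hp i).ne' (by linarith [hp i])).smul two_pos

end Diagonal

section Kwong

variable {n : ℕ} {p : Fin n → ℝ}

theorem posDef_kwong_of_mem_Ioo (hp : ∀ i, 0 < p i) (hinj : Function.Injective p) {s : ℝ}
    (hs : s ∈ Ioo 0 1) : (kwong p s).PosDef := by
  set c := ∫ t in Ioi 0, rpowIntegrand₀₁ s t 1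
  set M : ℝ → Matrix (Fin n) (Fin n) ℝ := fun t => Matrix.of fun i j =>
    (rpowIntegrand₀₁ s t (p i) + rpowIntegrand₀₁ s t (p j)) / (p i + p j)
  have hM : ∀ i j, IntegrableOn (fun t => M t i j) (Ioi 0) := fun i j =>
    ((integrableOn_rpowIntegrand₀₁_Ioi hs (hp i).le).add
      (integrableOn_rpowIntegrand₀₁_Ioi hs (hp j).le)).div_const _
  have hK : kwong p s = c⁻¹ • Matrix.of fun i j => ∫ t in Ioi 0, M t i j := by
    ext i j
    simp only [kwong, M, of_apply, Matrix.smul_apply, smul_eq_mul]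
    rw [rpow_eq_const_mul_integral hs (hp i).le, rpow_eq_const_mul_integral hs (hp j).le,
      integral_div, integral_add (integrableOn_rpowIntegrand₀₁_Ioi hs (hp i).le)
        (integrableOn_rpowIntegrand₀₁_Ioi hs (hp j).le)]
    ring
  refine .of_dotProduct_mulVec_pos (kwong_isHermitian p s) fun x hx => ?_
  rw [star_trivial, hK, smul_mulVec, dotProduct_smul, dotProduct_mulVec_of_integral hM,
    smul_eq_mul]
  refine mul_pos (inv_pos.mpr (integral_rpowIntegrand₀₁_one_pos hs))
    (setIntegral_pos_of_forall_pos measurableSet_Ioi (by simp)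
      (integrable_dotProduct_mulVec hM x x) fun t ht => ?_)
  simpa using (posDef_rpowIntegrand₀₁_kwong hp hinj hs ht).dotProduct_mulVec_pos hx

theorem kwong_zero (p : Fin n → ℝ) : kwong p 0 = (2 : ℝ) • Matrix.of fun i j => (p i + p j)⁻¹ := by
  ext i j
  simp [kwong, div_eq_mul_inv, one_add_one_eq_two]

theorem kwong_neg (hp : ∀ i, 0 < p i) (s : ℝ) :
    kwong p (-s) = diagonal (fun i => p i ^ (-s)) * kwong p s * diagonal (fun i => p i ^ (-s)) := by
  ext i j
  have := hp i
  have := hp j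
  simp only [kwong, diagonal_mul, mul_diagonal, of_apply, rpow_neg (hp i).le, rpow_neg (hp j).le]
  field_simp
  ring

theorem posDef_kwong (hp : ∀ i, 0 < p i) (hinj : Function.Injective p) {s : ℝ}
    (hs₁ : -1 < s) (hs₂ : s < 1) : (kwong p s).PosDef := by
  rcases lt_trichotomy s 0 with hs | rfl | hs
  · rw [← neg_neg s, kwong_neg hp]
    exact (posDef_kwong_of_mem_Ioo hp hinj ⟨by linarith, by linarith⟩).diagonal_mul_mul_diagonal
      fun i => (rpow_pos_of_pos (hp i) _).ne'
  · rw [kwong_zero]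
    exact (posDef_cauchy hp hinj).smul two_pos
  · exact posDef_kwong_of_mem_Ioo hp hinj ⟨hs, hs₂⟩

theorem kwong_eq_sub (hp : ∀ i, 0 < p i) (r : ℝ) :
    kwong p r = vecMulVec (fun i => p i ^ (r - 1)) 1 + vecMulVec 1 (fun i => p i ^ (r - 1))
      - diagonal p * kwong p (r - 2) * diagonal p := by
  ext i j
  have := hp i
  have := hp j
  have hr : ∀ k, p k ^ r = p k ^ (r - 2) * p k * p k ∧ p k ^ (r - 1) = p k ^ (r - 2) * p k :=
    fun k => ⟨by rw [← rpow_add_one (hp k).ne', ← rpow_add_one (hp k).ne']; ring_nf,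
      by rw [← rpow_add_one (hp k).ne']; ring_nf⟩
  simp only [kwong, vecMulVec, diagonal_mul, mul_diagonal, of_apply, Matrix.sub_apply,
    Matrix.add_apply, Pi.one_apply, mul_one, one_mul]
  rw [(hr i).1, (hr j).1, (hr i).2, (hr j).2]
  field_simp
  ring

theorem dotProduct_kwong_mulVec_of_one_dotProduct_eq_zero (hp : ∀ i, 0 < p i) (r : ℝ)
    {x : Fin n → ℝ} (hx : 1 ⬝ᵥ x = 0) :
    x ⬝ᵥ (kwong p r *ᵥ x) = -((diagonal p *ᵥ x) ⬝ᵥ (kwong p (r - 2) *ᵥ (diagonal p *ᵥ x))) := by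
  rw [kwong_eq_sub hp, sub_mulVec, add_mulVec, vecMulVec_mulVec, vecMulVec_mulVec,
    hx, ← mulVec_mulVec, ← mulVec_mulVec, dotProduct_sub,
    dotProduct_mulVec x (diagonal p), ← mulVec_transpose, diagonal_transpose]
  simp [dotProduct_comm x 1, hx]

theorem trace_kwong_pos [NeZero n] (hp : ∀ i, 0 < p i) (r : ℝ) : 0 < (kwong p r).trace :=
  Finset.sum_pos (fun i _ => by have := hp i; simp only [diag_apply, kwong, of_apply]; positivity)
    Finset.univ_nonempty

end Kwong

/-- for `n ≥ 2`, distinct positive `p i` and `1 < r < 3`, the inertia of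
the Kwong matrix `Kᵣ` is `(1, 0, n - 1)`. -/
theorem inertia_kwong_one_lt_r_lt_three {n : ℕ} (hn : 2 ≤ n) (p : Fin n → ℝ)
    (hpos : ∀ i, 0 < p i) (hinj : Function.Injective p)
    (r : ℝ) (hr1 : 1 < r) (hr2 : r < 3) :
    inertia (kwong p r) (kwong_isHermitian p r) = (1, 0, n - 1) := by
  have : NeZero n := ⟨by omega⟩
  refine inertia_eq_of_trace_pos_of_neg_on_hyperplane _ (trace_kwong_pos hpos r) (u := 1)
    fun x hx hsum => ?_
  have hpx : diagonal p *ᵥ x ≠ 0 :=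
    ((diagonal_mulVec_injective fun i => (hpos i).ne').ne_iff' (mulVec_zero _)).mpr hx
  rw [dotProduct_kwong_mulVec_of_one_dotProduct_eq_zero hpos r hsum, neg_lt_zero]
  simpa using (posDef_kwong hpos hinj (by linarith) (by linarith)).dotProduct_mulVec_pos hpx
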